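/- arXiv:0909.5432 — 2 statements merged into one kernel-verified Lean document; each statement's English description precedes it below -/
import Mathlib

section
/- Tensor product bound for the eigenfunction correlator: let H_J and H_K be self-adjoint operators on finite-dimensional Hilbert spaces and H = H_J ⊗ 1 + 1 ⊗ H_K. Then for product unit vectors δ_x = δ_{x_J} ⊗ δ_{x_K}, δ_y = δ_{y_J} ⊗ δ_{y_K} and any I ⊂ ℝ, Q_H(x,y;I) ≤ Q_{H_J}(x_J,y_J;ℝ) · Q_{H_K}(x_K,y_K;ℝ). -/
/-!
If `b` is an orthonormal eigenbasis of a Hermitian `A` with eigenvalues `μ`, then `⟨x, P_E y⟩` is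
the sum of the coefficients `⟨x, b i⟩⟨b i, y⟩` over the fibre `μ i = E`; hence `Q_A(x, y; I)` is at
most, and for `I = ℝ` equal to, the sum over the eigenvalues of the norms of these fibre sums.
Kronecker products of eigenbases of `H_J` and `H_K` form an eigenbasis of `H_J ⊗ 1 + 1 ⊗ H_K` with
eigenvalues `μ_J i + μ_K j`, and for product vectors the coefficients factor. Every fibre of
`(i, j) ↦ μ_J i + μ_K j` is a disjoint union of products of fibres of `μ_J` and `μ_K`, so the
triangle inequality gives the bound.
-/

open Kronecker

noncomputable section

/-- Orthogonal projection onto the eigenspace of the matrix `A` with eigenvalue `E`,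
applied to `v`. -/
def eigProjM {n : Type*} [Fintype n] [DecidableEq n] (A : Matrix n n ℂ) (E : ℝ)
    (v : EuclideanSpace ℂ n) : EuclideanSpace ℂ n :=
  (Submodule.orthogonalProjectionOnto (Module.End.eigenspace (Matrix.toEuclideanLin A) (E : ℂ)) v :
    EuclideanSpace ℂ n)

/-- The eigenfunction correlator `Q_A(x,y;I) = ∑_{E ∈ σ(A) ∩ I} |⟨x, P_{E}(A) y⟩|`. -/
def QM {n : Type*} [Fintype n] [DecidableEq n] (A : Matrix n n ℂ)
    (x y : EuclideanSpace ℂ n) (I : Set ℝ) : ℝ :=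
  ∑' E : {E : ℝ // (E : ℂ) ∈ spectrum ℂ A ∧ E ∈ I}, ‖(inner ℂ x (eigProjM A E y) : ℂ)‖

open Finset Matrix

section FiberwiseNormSum

variable {ι κ β γ E : Type*} [Fintype ι] [Fintype κ] [DecidableEq β] [DecidableEq γ]

def fiberwiseNormSum [SeminormedAddCommGroup E] (f : ι → β) (g : ι → E) : ℝ :=
  ∑ b ∈ univ.image f, ‖∑ i with f i = b, g i‖

lemma fiberwiseNormSum_comp_le [SeminormedAddCommGroup E] (φ : β → γ) (f : ι → β) (g : ι → E) :
    fiberwiseNormSum (φ ∘ f) g ≤ fiberwiseNormSum f g := by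
  have hfiber : ∀ c, ∑ i with φ (f i) = c, g i =
      ∑ b ∈ univ.image f with φ b = c, ∑ i with f i = b, g i := fun c => by
    rw [← sum_fiberwise_of_maps_to (g := f) (t := (univ.image f).filter (φ · = c))
      (fun i hi => by simpa using hi)]
    refine sum_congr rfl fun b hb => sum_congr ?_ fun _ _ => rfl
    ext i
    simp only [mem_filter, mem_univ, true_and] at hb ⊢
    exact ⟨fun h => h.2, fun h => ⟨h ▸ hb.2, h⟩⟩
  calc ∑ c ∈ univ.image (φ ∘ f), ‖∑ i with φ (f i) = c, g i‖
      ≤ ∑ c ∈ univ.image (φ ∘ f), ∑ b ∈ univ.image f with φ b = c, ‖∑ i with f i = b, g i‖ :=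
        sum_le_sum fun c _ => (hfiber c).symm ▸ norm_sum_le _ _
    _ = ∑ b ∈ univ.image f, ‖∑ i with f i = b, g i‖ :=
        sum_fiberwise_of_maps_to (fun b hb => by
          obtain ⟨i, -, rfl⟩ := mem_image.mp hb
          exact mem_image_of_mem (φ ∘ f) (mem_univ i)) _

lemma fiberwiseNormSum_prodMap_le [SeminormedRing E] (f : ι → β) (f' : κ → γ) (g : ι → E)
    (g' : κ → E) :
    fiberwiseNormSum (Prod.map f f') (fun p => g p.1 * g' p.2) ≤
      fiberwiseNormSum f g * fiberwiseNormSum f' g' := by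
  have himage : univ.image (Prod.map f f') = univ.image f ×ˢ univ.image f' := by
    rw [← univ_product_univ, prodMap_image_product]
  rw [fiberwiseNormSum, fiberwiseNormSum, fiberwiseNormSum, sum_mul_sum, himage, sum_product]
  refine sum_le_sum fun b _ => sum_le_sum fun b' _ => ?_
  have hfiber : ({p | Prod.map f f' p = (b, b')} : Finset (ι × κ)) =
      ({i | f i = b} : Finset ι) ×ˢ ({j | f' j = b'} : Finset κ) := by
    rw [← filter_product, univ_product_univ]
    simp only [Prod.map, Prod.ext_iff]
  rw [hfiber, sum_product, ← sum_mul_sum]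
  exact norm_mul_le _ _

lemma fiberwiseNormSum_add_le [SeminormedRing E] [Add β] (f : ι → β) (f' : κ → β) (g : ι → E)
    (g' : κ → E) :
    fiberwiseNormSum (fun p : ι × κ => f p.1 + f' p.2) (fun p => g p.1 * g' p.2) ≤
      fiberwiseNormSum f g * fiberwiseNormSum f' g' :=
  (fiberwiseNormSum_comp_le (fun q : β × β => q.1 + q.2) (Prod.map f f') _).trans
    (fiberwiseNormSum_prodMap_le f f' g g')

end FiberwiseNormSum

section Eigenprojection

variable {n ι : Type*} [Fintype n] [DecidableEq n] [Fintype ι] {A : Matrix n n ℂ}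

lemma eigProjM_eq_starProjection (E : ℝ) (v : EuclideanSpace ℂ n) :
    eigProjM A E v = (Module.End.eigenspace (toEuclideanLin A) (E : ℂ)).starProjection v :=
  rfl

lemma support_norm_inner_eigProjM_subset (x y : EuclideanSpace ℂ n) :
    Function.support (fun E : ℝ => ‖(inner ℂ x (eigProjM A E y) : ℂ)‖) ⊆
      {E : ℝ | (E : ℂ) ∈ spectrum ℂ A} := by
  intro E hE
  by_contra hspec
  have hbot : Module.End.eigenspace (toEuclideanLin A) (E : ℂ) = ⊥ := by
    rwa [Set.mem_ofPred_eq, ← spectrum_toLpLin, ← Module.End.hasEigenvalue_iff_mem_spectrum,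
      Module.End.hasEigenvalue_iff, not_not] at hspec
  have hproj : eigProjM A E y = 0 :=
    (Submodule.starProjection_apply_eq_zero_iff _).mpr (by simp [hbot])
  exact hE (by simp [hproj])

lemma summable_norm_inner_eigProjM (x y : EuclideanSpace ℂ n) :
    Summable fun E : ℝ => ‖(inner ℂ x (eigProjM A E y) : ℂ)‖ :=
  summable_of_hasFiniteSupport <|
    (A.finite_spectrum.preimage Complex.ofReal_injective.injOn).subset
      (support_norm_inner_eigProjM_subset x y)

lemma QM_le_tsum (x y : EuclideanSpace ℂ n) (I : Set ℝ) :
    QM A x y I ≤ ∑' E : ℝ, ‖(inner ℂ x (eigProjM A E y) : ℂ)‖ :=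
  (summable_norm_inner_eigProjM x y).tsum_subtype_le _ {E : ℝ | (E : ℂ) ∈ spectrum ℂ A ∧ E ∈ I}
    fun _ => norm_nonneg _

lemma QM_univ_eq_tsum (x y : EuclideanSpace ℂ n) :
    QM A x y Set.univ = ∑' E : ℝ, ‖(inner ℂ x (eigProjM A E y) : ℂ)‖ :=
  tsum_subtype_eq_of_support_subset (s := {E : ℝ | (E : ℂ) ∈ spectrum ℂ A ∧ E ∈ Set.univ})
    fun _ hE => ⟨support_norm_inner_eigProjM_subset x y hE, trivial⟩

variable {b : OrthonormalBasis ι ℂ (EuclideanSpace ℂ n)} {μ : ι → ℝ}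

lemma eigProjM_orthonormalBasis (hA : A.IsHermitian)
    (hb : ∀ i, toEuclideanLin A (b i) = (μ i : ℂ) • b i) (E : ℝ) (i : ι) :
    eigProjM A E (b i) = if μ i = E then b i else 0 := by
  have hbi : b i ∈ Module.End.eigenspace (toEuclideanLin A) (μ i : ℂ) :=
    Module.End.mem_eigenspace_iff.mpr (hb i)
  rw [eigProjM_eq_starProjection]
  split_ifs with h
  · exact Submodule.starProjection_eq_self_iff.mpr (h ▸ hbi)
  · refine (Submodule.starProjection_apply_eq_zero_iff _).mpr
      ((Submodule.mem_orthogonal _ _).mpr fun u hu => ?_)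
    exact (isSymmetric_toEuclideanLin_iff.mpr hA).orthogonalFamily_eigenspaces
      (by exact_mod_cast Ne.symm h) ⟨u, hu⟩ ⟨b i, hbi⟩

lemma inner_eigProjM_eq_sum (hA : A.IsHermitian)
    (hb : ∀ i, toEuclideanLin A (b i) = (μ i : ℂ) • b i) (E : ℝ) (x y : EuclideanSpace ℂ n) :
    (inner ℂ x (eigProjM A E y) : ℂ) =
      ∑ i with μ i = E, (inner ℂ x (b i) : ℂ) * (inner ℂ (b i) y : ℂ) := by
  conv_lhs => rw [← b.sum_repr' y, eigProjM_eq_starProjection, map_sum]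
  simp only [map_smul, ← eigProjM_eq_starProjection, eigProjM_orthonormalBasis hA hb,
    inner_sum, inner_smul_right, sum_filter]
  refine sum_congr rfl fun i _ => ?_
  split_ifs <;> simp [mul_comm]

lemma tsum_norm_inner_eigProjM (hA : A.IsHermitian)
    (hb : ∀ i, toEuclideanLin A (b i) = (μ i : ℂ) • b i) (x y : EuclideanSpace ℂ n) :
    ∑' E : ℝ, ‖(inner ℂ x (eigProjM A E y) : ℂ)‖ =
      fiberwiseNormSum μ fun i => (inner ℂ x (b i) : ℂ) * (inner ℂ (b i) y : ℂ) := by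
  simp only [inner_eigProjM_eq_sum hA hb, fiberwiseNormSum]
  refine tsum_eq_sum fun E hE => ?_
  rw [filter_false_of_mem fun i _ (hi : μ i = E) => hE (hi ▸ mem_image_of_mem μ (mem_univ i)),
    sum_empty, norm_zero]

end Eigenprojection

section KronVec

variable {𝕜 m n : Type*} [RCLike 𝕜]

def kronVec (u : EuclideanSpace 𝕜 m) (v : EuclideanSpace 𝕜 n) : EuclideanSpace 𝕜 (m × n) :=
  WithLp.toLp 2 fun p => u p.1 * v p.2

@[simp] lemma kronVec_apply (u : EuclideanSpace 𝕜 m) (v : EuclideanSpace 𝕜 n) (p : m × n) :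
    kronVec u v p = u p.1 * v p.2 :=
  rfl

lemma kronVec_single [DecidableEq m] [DecidableEq n] (i : m) (j : n) :
    kronVec (EuclideanSpace.single i (1 : 𝕜)) (EuclideanSpace.single j 1) =
      EuclideanSpace.single (i, j) 1 := by
  ext ⟨a, c⟩
  by_cases ha : a = i <;> by_cases hc : c = j <;> simp [ha, hc]

variable [Fintype m] [Fintype n]

lemma inner_kronVec (u u' : EuclideanSpace 𝕜 m) (v v' : EuclideanSpace 𝕜 n) :
    (inner 𝕜 (kronVec u v) (kronVec u' v') : 𝕜) = inner 𝕜 u u' * inner 𝕜 v v' := by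
  simp only [PiLp.inner_apply, RCLike.inner_apply, kronVec_apply, Fintype.sum_prod_type,
    sum_mul_sum, map_mul]
  exact sum_congr rfl fun _ _ => sum_congr rfl fun _ _ => by ring

lemma orthonormal_kronVec {ι κ : Type*} {bm : ι → EuclideanSpace 𝕜 m} {bn : κ → EuclideanSpace 𝕜 n}
    (hm : Orthonormal 𝕜 bm) (hn : Orthonormal 𝕜 bn) :
    Orthonormal 𝕜 fun p : ι × κ => kronVec (bm p.1) (bn p.2) := by
  classical
  rw [orthonormal_iff_ite] at hm hn ⊢
  intro p q
  rw [inner_kronVec, hm, hn]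
  by_cases h1 : p.1 = q.1 <;> by_cases h2 : p.2 = q.2 <;> simp [h1, h2, Prod.ext_iff]

def kronBasis {ι κ : Type*} [Fintype ι] [Fintype κ] (bm : OrthonormalBasis ι 𝕜 (EuclideanSpace 𝕜 m))
    (bn : OrthonormalBasis κ 𝕜 (EuclideanSpace 𝕜 n)) :
    OrthonormalBasis (ι × κ) 𝕜 (EuclideanSpace 𝕜 (m × n)) :=
  OrthonormalBasis.mk (orthonormal_kronVec bm.orthonormal bn.orthonormal) <| by
    classical
    refine ge_of_eq ((orthonormal_kronVec bm.orthonormal bn.orthonormal).linearIndependent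
      |>.span_eq_top_of_card_eq_finrank' ?_)
    rw [Fintype.card_prod, finrank_euclideanSpace, Fintype.card_prod,
      ← Module.finrank_eq_card_basis bm.toBasis, ← Module.finrank_eq_card_basis bn.toBasis,
      finrank_euclideanSpace, finrank_euclideanSpace]

@[simp] lemma kronBasis_apply {ι κ : Type*} [Fintype ι] [Fintype κ]
    (bm : OrthonormalBasis ι 𝕜 (EuclideanSpace 𝕜 m)) (bn : OrthonormalBasis κ 𝕜 (EuclideanSpace 𝕜 n))
    (p : ι × κ) : kronBasis bm bn p = kronVec (bm p.1) (bn p.2) := by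
  rw [kronBasis, OrthonormalBasis.coe_mk]

variable [DecidableEq m] [DecidableEq n]

lemma toEuclideanLin_kronecker_kronVec (A : Matrix m m 𝕜) (B : Matrix n n 𝕜)
    (u : EuclideanSpace 𝕜 m) (v : EuclideanSpace 𝕜 n) :
    toEuclideanLin (A ⊗ₖ B) (kronVec u v) = kronVec (toEuclideanLin A u) (toEuclideanLin B v) := by
  ext ⟨i, j⟩
  simp only [toLpLin_apply, kronVec_apply, mulVec, dotProduct, kroneckerMap_apply,
    Fintype.sum_prod_type, sum_mul_sum]
  exact sum_congr rfl fun _ _ => sum_congr rfl fun _ _ => by ring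

lemma toEuclideanLin_kroneckerSum_kronVec {A : Matrix m m 𝕜} {B : Matrix n n 𝕜}
    {u : EuclideanSpace 𝕜 m} {v : EuclideanSpace 𝕜 n} {a c : 𝕜}
    (hu : toEuclideanLin A u = a • u) (hv : toEuclideanLin B v = c • v) :
    toEuclideanLin (A ⊗ₖ (1 : Matrix n n 𝕜) + (1 : Matrix m m 𝕜) ⊗ₖ B) (kronVec u v) =
      (a + c) • kronVec u v := by
  rw [map_add, LinearMap.add_apply, toEuclideanLin_kronecker_kronVec,
    toEuclideanLin_kronecker_kronVec, hu, hv]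
  ext p
  simp only [kronVec_apply, PiLp.add_apply, PiLp.smul_apply, smul_eq_mul, toLpLin_apply,
    one_mulVec]
  ring

end KronVec

lemma Matrix.IsHermitian.kronecker {𝕜 m n : Type*} [RCLike 𝕜] {A : Matrix m m 𝕜}
    {B : Matrix n n 𝕜} (hA : A.IsHermitian) (hB : B.IsHermitian) : (A ⊗ₖ B).IsHermitian := by
  rw [IsHermitian, conjTranspose_kronecker, hA.eq, hB.eq]

lemma Matrix.IsHermitian.toEuclideanLin_eigenvectorBasis {𝕜 n : Type*} [RCLike 𝕜] [Fintype n]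
    [DecidableEq n] {A : Matrix n n 𝕜} (hA : A.IsHermitian) (i : n) :
    toEuclideanLin A (hA.eigenvectorBasis i) = (hA.eigenvalues i : 𝕜) • hA.eigenvectorBasis i := by
  ext j
  simp [toLpLin_apply, hA.mulVec_eigenvectorBasis, RCLike.real_smul_eq_coe_mul]

/-- Tensor product bound for the eigenfunction correlator: for
`H = H_J ⊗ 1 + 1 ⊗ H_K` and product basis vectors,
`Q_H(x,y;I) ≤ Q_{H_J}(x_J,y_J;ℝ) · Q_{H_K}(x_K,y_K;ℝ)`. -/
theorem efCorr_tensor_bound {m k : ℕ}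
    (HJ : Matrix (Fin m) (Fin m) ℂ) (HK : Matrix (Fin k) (Fin k) ℂ)
    (hJ : HJ.IsHermitian) (hK : HK.IsHermitian) (I : Set ℝ)
    (xJ yJ : Fin m) (xK yK : Fin k) :
    QM (HJ ⊗ₖ (1 : Matrix (Fin k) (Fin k) ℂ) + (1 : Matrix (Fin m) (Fin m) ℂ) ⊗ₖ HK)
        (EuclideanSpace.single (xJ, xK) 1) (EuclideanSpace.single (yJ, yK) 1) I
      ≤ QM HJ (EuclideanSpace.single xJ 1) (EuclideanSpace.single yJ 1) Set.univ *
        QM HK (EuclideanSpace.single xK 1) (EuclideanSpace.single yK 1) Set.univ := by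
  have hbJ := hJ.toEuclideanLin_eigenvectorBasis
  have hbK := hK.toEuclideanLin_eigenvectorBasis
  have hH := (hJ.kronecker isHermitian_one).add (isHermitian_one.kronecker hK)
  have hbH (p : Fin m × Fin k) :
      toEuclideanLin (HJ ⊗ₖ (1 : Matrix (Fin k) (Fin k) ℂ) + (1 : Matrix (Fin m) (Fin m) ℂ) ⊗ₖ HK)
          (kronBasis hJ.eigenvectorBasis hK.eigenvectorBasis p) =
        ((hJ.eigenvalues p.1 + hK.eigenvalues p.2 : ℝ) : ℂ) •
          kronBasis hJ.eigenvectorBasis hK.eigenvectorBasis p := by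
    rw [kronBasis_apply, Complex.ofReal_add]
    exact toEuclideanLin_kroneckerSum_kronVec (hbJ p.1) (hbK p.2)
  refine (QM_le_tsum _ _ I).trans ?_
  rw [tsum_norm_inner_eigProjM hH hbH, QM_univ_eq_tsum, QM_univ_eq_tsum,
    tsum_norm_inner_eigProjM (μ := hJ.eigenvalues) hJ hbJ,
    tsum_norm_inner_eigProjM (μ := hK.eigenvalues) hK hbK]
  refine le_of_eq_of_le ?_ (fiberwiseNormSum_add_le _ _ _ _)
  simp only [kronBasis_apply, ← kronVec_single, inner_kronVec, mul_mul_mul_comm]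
end
end

section
/- If a sequence a : ℕ → ℝ_{≥0} satisfies a(2L) ≤ a(L)^2 + ε(L) where ε(L) ≤ δ·e^{-2νL} for all L, and a(L_0) ≤ e^{-νL_0} for some L_0 with (1+δ) e^{-νL_0} ≤ 1, then a(2^k L_0) ≤ ((1+δ) e^{-ν L_0})^{2^k} / (1+δ) for all k ≥ 0; in particular a(2^k L_0) → 0 faster than any exponential in k. -/
/-! With `r = 1 + δ`, `E = e^{-νL₀}` and `b k = a(2^k L₀)`, the recursion reads
`b (k+1) ≤ b k ^ 2 + δ (E^{2^k})^2`. The quantity `Y k = (r E)^{2^k}` squares at each step and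
dominates both `r · b k` and `r · E^{2^k}`, so `r² b (k+1) ≤ (r b k)² + δ (r E^{2^k})² ≤ r Y (k+1)`. -/

lemma pow_le_mul_pow_div {r x : ℝ} (hr : 1 ≤ r) (hx : 0 ≤ x) {n : ℕ} (hn : n ≠ 0) :
    x ^ n ≤ (r * x) ^ n / r := by
  rw [le_div_iff₀ (by linarith), mul_pow]
  rw [mul_comm (r ^ n)]
  exact mul_le_mul_of_nonneg_left (le_self_pow₀ hr hn) (pow_nonneg hx n)

lemma sq_add_mul_sq_le {x y M δ : ℝ} (hx₀ : 0 ≤ x) (hx : x ≤ M) (hy₀ : 0 ≤ y) (hy : y ≤ M)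
    (hδ : 0 ≤ δ) : x ^ 2 + δ * y ^ 2 ≤ (1 + δ) * M ^ 2 := by
  have hx2 : x ^ 2 ≤ M ^ 2 := pow_le_pow_left₀ hx₀ hx 2
  have hy2 : y ^ 2 ≤ M ^ 2 := pow_le_pow_left₀ hy₀ hy 2
  nlinarith [mul_le_mul_of_nonneg_left hy2 hδ]

lemma le_pow_two_pow_of_le_sq_add {b : ℕ → ℝ} {δ E : ℝ} (hb : ∀ k, 0 ≤ b k) (hδ : 0 ≤ δ)
    (hE : 0 ≤ E) (hrec : ∀ k, b (k + 1) ≤ b k ^ 2 + δ * (E ^ 2 ^ k) ^ 2) (h0 : b 0 ≤ E)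
    (k : ℕ) : b k ≤ ((1 + δ) * E) ^ 2 ^ k / (1 + δ) := by
  induction k with
  | zero => rwa [pow_zero, pow_one, mul_div_cancel_left₀ _ (by linarith)]
  | succ k ih =>
    have hEk : E ^ 2 ^ k ≤ ((1 + δ) * E) ^ 2 ^ k / (1 + δ) :=
      pow_le_mul_pow_div (by linarith) hE (by positivity)
    calc b (k + 1) ≤ b k ^ 2 + δ * (E ^ 2 ^ k) ^ 2 := hrec k
      _ ≤ (1 + δ) * (((1 + δ) * E) ^ 2 ^ k / (1 + δ)) ^ 2 :=
        sq_add_mul_sq_le (hb k) ih (by positivity) hEk hδ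
      _ = ((1 + δ) * E) ^ 2 ^ (k + 1) / (1 + δ) := by
        field_simp
        ring

theorem rescaling_doubly_exponential_decay_general
    (a : ℕ → ℝ) (ha : ∀ L, 0 ≤ a L) (ε : ℕ → ℝ) (δ ν : ℝ) (hδ : 0 ≤ δ)
    (hrec : ∀ L : ℕ, a (2 * L) ≤ (a L) ^ 2 + ε L)
    (hε : ∀ L : ℕ, ε L ≤ δ * Real.exp (-2 * ν * L))
    (L₀ : ℕ) (h0 : a L₀ ≤ Real.exp (-ν * L₀)) :
    ∀ k : ℕ, a (2 ^ k * L₀) ≤ ((1 + δ) * Real.exp (-ν * L₀)) ^ (2 ^ k) / (1 + δ) := by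
  have hexp (k : ℕ) :
      Real.exp (-2 * ν * ((2 ^ k * L₀ : ℕ) : ℝ)) = (Real.exp (-ν * L₀) ^ 2 ^ k) ^ 2 := by
    rw [← Real.exp_nat_mul, ← Real.exp_nat_mul]
    push_cast
    ring_nf
  refine le_pow_two_pow_of_le_sq_add (fun k ↦ ha _) hδ (Real.exp_nonneg _) (fun k ↦ ?_)
    (by simpa using h0)
  calc a (2 ^ (k + 1) * L₀) = a (2 * (2 ^ k * L₀)) := by rw [pow_succ, mul_comm _ 2, mul_assoc]
    _ ≤ a (2 ^ k * L₀) ^ 2 + ε (2 ^ k * L₀) := hrec _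
    _ ≤ a (2 ^ k * L₀) ^ 2 + δ * (Real.exp (-ν * L₀) ^ 2 ^ k) ^ 2 := by
      rw [← hexp]
      gcongr
      exact hε _

/-- Abstract rescaling bound: if `a(2L) ≤ a(L)² + ε(L)` with `ε(L) ≤ δ e^{-2νL}`, and
`a(L₀) ≤ e^{-νL₀}` at a scale `L₀` with `(1+δ) e^{-νL₀} ≤ 1`, then
`a(2^k L₀) ≤ ((1+δ) e^{-νL₀})^{2^k} / (1+δ)` for all `k`; in particular `a(2^k L₀)`
tends to `0` faster than any exponential in `k`. -/
theorem rescaling_doubly_exponential_decay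
    (a : ℕ → ℝ) (ha : ∀ L, 0 ≤ a L) (ε : ℕ → ℝ) (δ ν : ℝ) (hδ : 0 ≤ δ) (hν : 0 < ν)
    (hrec : ∀ L : ℕ, a (2 * L) ≤ (a L) ^ 2 + ε L)
    (hε : ∀ L : ℕ, ε L ≤ δ * Real.exp (-2 * ν * L))
    (L₀ : ℕ) (h0 : a L₀ ≤ Real.exp (-ν * L₀))
    (h1 : (1 + δ) * Real.exp (-ν * L₀) ≤ 1) :
    ∀ k : ℕ, a (2 ^ k * L₀) ≤ ((1 + δ) * Real.exp (-ν * L₀)) ^ (2 ^ k) / (1 + δ) :=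
  rescaling_doubly_exponential_decay_general a ha ε δ ν hδ hrec hε L₀ h0
end
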